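/- Let L : A* ⇀ B* be a partial function. The Kl(T)-automaton 𝒜_init defined by 𝒜_init(center) = A*, 𝒜_init(▷) : 1 ⇸ A* sending 0 to (ε, ε), 𝒜_init(a) : A* ⇸ A* sending w to (ε, wa) for each a ∈ A, and 𝒜_init(◁) : A* ⇸ 1 sending w to (L(w), 0) when L(w) is defined and to ⊥ otherwise, accepts L_Kl and is an initial object of Auto(L_Kl). -/

import Mathlib

open CategoryTheory CategoryTheory.Limits

universe v u

/-! ### The input category `I_A` of word automata -/

inductive WObj (A : Type) : Type where
  | left | center | right

inductive WEdge {A : Type} : WObj A → WObj A → Type where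
  | tri : WEdge WObj.left WObj.center
  | letter (a : A) : WEdge WObj.center WObj.center
  | tril : WEdge WObj.center WObj.right

instance (A : Type) : Quiver (WObj A) := ⟨WEdge⟩

/-- `I_A`: the free category on the graph `left -▷→ center -a→ center -◁→ right`. -/
def IA (A : Type) : Type := Paths (WObj A)

instance (A : Type) : Category (IA A) :=
  inferInstanceAs (Category (Paths (WObj A)))

def IA.l (A : Type) : IA A := WObj.left
def IA.c (A : Type) : IA A := WObj.center
def IA.r (A : Type) : IA A := WObj.right

/-- The generating morphism `▷ : left ⟶ center`. -/
def IA.tri (A : Type) : IA.l A ⟶ IA.c A := Quiver.Hom.toPath WEdge.tri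
/-- The generating morphism `a : center ⟶ center` for a letter `a`. -/
def IA.letter {A : Type} (a : A) : IA.c A ⟶ IA.c A := Quiver.Hom.toPath (WEdge.letter a)
/-- The generating morphism `◁ : center ⟶ right`. -/
def IA.tril (A : Type) : IA.c A ⟶ IA.r A := Quiver.Hom.toPath WEdge.tril

/-- The word spelled by a path in the graph (the sequence of `letter` edges used). -/
def toWord {A : Type} : ∀ {X Y : WObj A}, Quiver.Path X Y → List A
  | _, _, Quiver.Path.nil => []
  | _, _, Quiver.Path.cons p e =>
      toWord p ++ (match e with
        | WEdge.letter a => [a]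
        | _ => [])

/-- The path `center → center` spelling a word `w`. -/
def pathCC {A : Type} : List A → ((IA.c A) ⟶ (IA.c A))
  | [] => Quiver.Path.nil
  | a :: w => (Quiver.Hom.toPath (WEdge.letter a)).comp (pathCC w)

/-- The path `▷ w ◁ : left ⟶ right` spelling a word `w`. -/
def pathLR {A : Type} (w : List A) : (IA.l A) ⟶ (IA.r A) :=
  IA.tri A ≫ pathCC w ≫ IA.tril A

theorem path_from_right {A : Type} : ∀ {Z : WObj A},
    Quiver.Path (WObj.right : WObj A) Z → Z = WObj.right
  | _, Quiver.Path.nil => rfl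
  | _, Quiver.Path.cons p e => by
      have h := path_from_right p
      subst h
      exact nomatch e

theorem path_ll_nil {A : Type} (p : Quiver.Path (WObj.left : WObj A) WObj.left) :
    p = Quiver.Path.nil := by
  cases p with
  | nil => rfl
  | cons q e => exact nomatch e

theorem path_rr_nil {A : Type} (p : Quiver.Path (WObj.right : WObj A) WObj.right) :
    p = Quiver.Path.nil := by
  cases p with
  | nil => rfl
  | cons q e =>
      have h := path_from_right q
      subst h
      exact nomatch e

theorem path_rl_false {A : Type} (p : Quiver.Path (WObj.right : WObj A) WObj.left) :
    False := by
  have := path_from_right p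
  exact nomatch this

/-- `O_A`: the full subcategory of `I_A` on the objects `left` and `right`. -/
def OA (A : Type) : Type := ObjectProperty.FullSubcategory (fun X : IA A => X ≠ IA.c A)

instance (A : Type) : Category (OA A) :=
  inferInstanceAs (Category (ObjectProperty.FullSubcategory (fun X : IA A => X ≠ IA.c A)))

/-- The inclusion functor `ι : O_A ⥤ I_A`. -/
def OA.inc (A : Type) : OA A ⥤ IA A := ObjectProperty.ι _

def OA.l (A : Type) : OA A := ⟨IA.l A, fun h => nomatch (h : (WObj.left : WObj A) = WObj.center)⟩
def OA.r (A : Type) : OA A := ⟨IA.r A, fun h => nomatch (h : (WObj.right : WObj A) = WObj.center)⟩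

/-- The morphism `▷ w ◁ : left ⟶ right` of `O_A`. -/
def OA.word {A : Type} (w : List A) : OA.l A ⟶ OA.r A := ⟨pathLR w⟩

/-- The language `O_A ⥤ C` determined by two objects `LI`, `LO` of `C` and a function
assigning to every word `w ∈ A*` a morphism `LI ⟶ LO` (the value at `▷w◁`). -/
def mkLang {A : Type} {C : Type u} [Category.{v} C] (LI LO : C)
    (f : List A → (LI ⟶ LO)) : OA A ⥤ C where
  obj X :=
    match X with
    | ⟨WObj.left, _⟩ => LI
    | ⟨WObj.right, _⟩ => LO
    | ⟨WObj.center, h⟩ => absurd rfl h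
  map {X Y} p :=
    match X, Y, p with
    | ⟨WObj.left, _⟩, ⟨WObj.left, _⟩, _ => 𝟙 LI
    | ⟨WObj.left, _⟩, ⟨WObj.right, _⟩, p => f (toWord p.hom)
    | ⟨WObj.right, _⟩, ⟨WObj.right, _⟩, _ => 𝟙 LO
    | ⟨WObj.right, _⟩, ⟨WObj.left, _⟩, p => (path_rl_false p.hom).elim
    | ⟨WObj.center, h⟩, _, _ => absurd rfl h
    | _, ⟨WObj.center, h⟩, _ => absurd rfl h
  map_id X := by
    rcases X with ⟨(_|_|_), hX⟩
    · rfl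
    · exact absurd rfl hX
    · rfl
  map_comp {X Y Z} p q := by
    rcases X with ⟨(_|_|_), hX⟩ <;> rcases Y with ⟨(_|_|_), hY⟩ <;>
      rcases Z with ⟨(_|_|_), hZ⟩ <;>
      rcases p with ⟨p⟩ <;> rcases q with ⟨q⟩ <;>
      first
        | exact absurd rfl hX
        | exact absurd rfl hY
        | exact absurd rfl hZ
        | exact (path_rl_false p).elim
        | exact (path_rl_false q).elim
        | exact (Category.id_comp _).symm
        | (have hp := path_ll_nil p
           subst hp
           show f (toWord (Quiver.Path.comp Quiver.Path.nil q)) = 𝟙 LI ≫ f (toWord q)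
           erw [Quiver.Path.nil_comp, Category.id_comp])
        | (have hq := path_rr_nil q
           subst hq
           show f (toWord (Quiver.Path.comp p Quiver.Path.nil)) = f (toWord p) ≫ 𝟙 LO
           erw [Quiver.Path.comp_nil, Category.comp_id])

/-- A `C`-automaton `M` accepts the `C`-language `L` when `ι ⋙ M = L`. -/
def Accepts {A : Type} {C : Type u} [Category.{v} C] (M : IA A ⥤ C) (L : OA A ⥤ C) : Prop :=
  OA.inc A ⋙ M = L

/-- The category `Auto(L)` of `C`-automata accepting the language `L`; morphisms are
natural transformations whose whiskering along `ι` is the identity of `L`. -/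
def Auto (A : Type) {C : Type u} [Category.{v} C] (L : OA A ⥤ C) : Type _ :=
  { M : IA A ⥤ C // Accepts M L }

instance (A : Type) {C : Type u} [Category.{v} C] (L : OA A ⥤ C) :
    Category (Auto A L) where
  Hom M N := { α : M.1 ⟶ N.1 //
    CategoryTheory.Functor.whiskerLeft (OA.inc A) α = eqToHom (M.2.trans N.2.symm) }
  id M := ⟨𝟙 M.1, by simp⟩
  comp {M N P} f g := ⟨f.1 ≫ g.1, by
    rw [CategoryTheory.Functor.whiskerLeft_comp, f.2, g.2, eqToHom_trans]⟩
  id_comp f := Subtype.ext (Category.id_comp _)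
  comp_id f := Subtype.ext (Category.comp_id _)
  assoc f g h := Subtype.ext (Category.assoc _ _ _)

/-- The functor `St : Auto(L) ⥤ C` evaluating an automaton at the object `center`. -/
def St (A : Type) {C : Type u} [Category.{v} C] (L : OA A ⥤ C) : Auto A L ⥤ C where
  obj M := M.1.obj (IA.c A)
  map f := f.1.app (IA.c A)
  map_id _ := rfl
  map_comp _ _ := rfl

/-- The underlying natural transformation of a morphism in `Auto(L)`. -/
def Auto.nat {A : Type} {C : Type u} [Category.{v} C] {L : OA A ⥤ C} {M N : Auto A L}
    (α : M ⟶ N) : M.1 ⟶ N.1 :=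
  (show { β : M.1 ⟶ N.1 //
      CategoryTheory.Functor.whiskerLeft (OA.inc A) β = eqToHom (M.2.trans N.2.symm) } from α).1

/-- Constructor for objects of `Auto(L)`. -/
def Auto.mk {A : Type} {C : Type u} [Category.{v} C] {L : OA A ⥤ C}
    (M : IA A ⥤ C) (h : Accepts M L) : Auto A L := ⟨M, h⟩

/-! ### The transducer monad `T X = B* × X + 1` and its Kleisli category -/

/-- The monad `T X = B* × X + 1` (implemented as `Option (List B × X)`,
with `none` playing the role of `⊥ ∈ 1`). -/
def TM (B : Type) (X : Type) : Type := Option (List B × X)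

namespace TM

variable {B : Type}

/-- `⊥` : the element of `1` in `T X = B* × X + 1`. -/
def bot {X : Type} : TM B X := (none : Option (List B × X))

/-- `(w, x)` as an element of `T X`. -/
def el {X : Type} (w : List B) (x : X) : TM B X := (some (w, x) : Option (List B × X))

/-- The unit of the monad: `x ↦ (ε, x)`. -/
def unit {X : Type} (x : X) : TM B X := el [] x

/-- The bind operation of the monad, corresponding to the multiplication
`(w, (u, x)) ↦ (wu, x)`, everything else going to `⊥`. -/
def bindT {X Y : Type} (t : TM B X) (f : X → TM B Y) : TM B Y :=
  Option.bind (t : Option (List B × X)) fun p =>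
    Option.map (fun q => (p.1 ++ q.1, q.2)) (f p.2 : Option (List B × Y))

instance : Monad (TM B) where
  pure := unit
  bind := bindT

instance : LawfulMonad (TM B) := by
  apply LawfulMonad.mk' (m := TM B)
  · intro α t
    show bindT t (fun x => unit x) = t
    rcases (t : Option (List B × α)) with _ | ⟨w, x⟩
    · rfl
    · simp [bindT, unit, el] <;> rfl
  · intro α β x f
    show bindT (unit x) f = f x
    rcases hf : (f x : Option (List B × β)) with _ | ⟨u, y⟩ <;>
      simp [bindT, unit, el, hf] <;> rfl
  · intro α β γ t f g
    show bindT (bindT t f) g = bindT t fun x => bindT (f x) g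
    rcases (t : Option (List B × α)) with _ | ⟨w, x⟩
    · rfl
    · rcases hf : (f x : Option (List B × β)) with _ | ⟨u, y⟩
      · simp [bindT, hf] <;> rfl
      · rcases hg : (g y : Option (List B × γ)) with _ | ⟨v, z⟩ <;>
          simp [bindT, hf, hg] <;> rfl

end TM

/-- The Kleisli category `Kl(T)` of the monad `T X = B* × X + 1`. -/
abbrev KlT (B : Type) := CategoryTheory.KleisliCat (TM B)

/-- The projection `π₁(f) : X → B* + 1` of a Kleisli morphism `f : X ⇸ Y`. -/
def pi1 {B X Y : Type} (f : X → TM B Y) : X → Option (List B) :=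
  fun x => Option.map Prod.fst (f x : Option (List B × Y))

/-- The projection `π₂(f) : X → Y + 1` of a Kleisli morphism `f : X ⇸ Y`. -/
def pi2 {B X Y : Type} (f : X → TM B Y) : X → Option Y :=
  fun x => Option.map Prod.snd (f x : Option (List B × Y))

/-- The class `E_Kl` of Kleisli morphisms `e` with `π₂(e)` surjective onto `Y`. -/
def EKl {B : Type} {X Y : KlT B} (f : X ⟶ Y) : Prop :=
  ∀ y : Y, ∃ x : X, pi2 f x = some y

/-- The class `M_Kl` of Kleisli morphisms `m` with `π₂(m)` injective and `π₁(m)`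
constantly `ε`. -/
def MKl {B : Type} {X Y : KlT B} (f : X ⟶ Y) : Prop :=
  Function.Injective (pi2 f) ∧ ∀ x : X, pi1 f x = some ([] : List B)

/-- The `(Kl(T), 1, 1)`-language associated with a partial function `L : A* ⇀ B*`
(represented as `L : A* → Option B*`): it sends `▷w◁` to the Kleisli morphism `1 ⇸ 1`
given by `(L(w), 0)` when `L(w)` is defined and `⊥` otherwise. -/
def LKl (A B : Type) (L : List A → Option (List B)) : OA A ⥤ KlT B :=
  mkLang (CategoryTheory.KleisliCat.mk (TM B) PUnit) (CategoryTheory.KleisliCat.mk (TM B) PUnit)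
    (fun w => fun _ : PUnit => ((L w).map (fun v => (v, PUnit.unit)) : TM B PUnit))

/-- The initial `Kl(T)`-automaton for a partial function `L : A* ⇀ B*`, defined on the
generating graph: states `A*`, `▷` sends `0` to `(ε, ε)`, a letter `a` sends `w` to
`(ε, wa)`, and `◁` sends `w` to `(L(w), 0)` when defined and to `⊥` otherwise. -/
def AinitKlPre (A B : Type) (L : List A → Option (List B)) : WObj A ⥤q KlT B where
  obj X :=
    match X with
    | WObj.left => CategoryTheory.KleisliCat.mk (TM B) PUnit
    | WObj.center => CategoryTheory.KleisliCat.mk (TM B) (List A)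
    | WObj.right => CategoryTheory.KleisliCat.mk (TM B) PUnit
  map e :=
    match e with
    | WEdge.tri => fun _ : PUnit => TM.el ([] : List B) ([] : List A)
    | WEdge.letter a => fun w : List A => TM.el ([] : List B) (w ++ [a])
    | WEdge.tril => fun w : List A => ((L w).map (fun v => (v, PUnit.unit)) : TM B PUnit)

/-- The corresponding functor `I_A ⥤ Kl(T)`. -/
def AinitKl (A B : Type) (L : List A → Option (List B)) : IA A ⥤ KlT B :=
  Paths.lift (AinitKlPre A B L)

/-!
On paths out of `left`, `𝒜_init` is deterministic: it sends `▷ p` to `(ε, word of p)` and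
`▷ p ◁` to `L_Kl` at that word, hence it accepts `L_Kl`. Given any automaton `M` accepting `L_Kl`,
naturality along `▷ w` forces the center component of a morphism `𝒜_init ⟶ M` to be
`w ↦ M(▷ w)(0)`, and the left and right components are identities. Conversely these components are
natural: along a letter by functoriality of `M`, along `◁` because `𝒜_init` and `M` agree on
`▷ w ◁`.
-/

open Quiver

section Words

variable {A : Type}

@[simp]
theorem toWord_nil {X : WObj A} : toWord (Path.nil : Path X X) = [] := by
  simp [toWord]

@[simp]
theorem toWord_cons_tri {X : WObj A} (p : Path X .left) : toWord (p.cons .tri) = toWord p := by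
  simp [toWord]

@[simp]
theorem toWord_cons_letter {X : WObj A} (p : Path X .center) (a : A) :
    toWord (p.cons (.letter a)) = toWord p ++ [a] := by
  simp [toWord]

@[simp]
theorem toWord_cons_tril {X : WObj A} (p : Path X .center) :
    toWord (p.cons .tril) = toWord p := by
  simp [toWord]

theorem toWord_comp {X Y Z : WObj A} (p : Path X Y) (q : Path Y Z) :
    toWord (p.comp q) = toWord p ++ toWord q := by
  induction q with
  | nil => simp
  | cons q e ih =>
    change WEdge _ _ at e
    cases e <;> simp [ih]

theorem toWord_pathCC (w : List A) : toWord (X := .center) (Y := .center) (pathCC w) = w := by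
  induction w with
  | nil => exact toWord_nil
  | cons a w ih =>
    erw [toWord_comp, ih, toWord_cons_letter, toWord_nil]
    rfl

theorem pathCC_append (u v : List A) : pathCC (u ++ v) = pathCC u ≫ pathCC v := by
  induction u with
  | nil => exact (Path.nil_comp _).symm
  | cons a u ih => exact (congrArg _ ih).trans (Path.comp_assoc _ _ _).symm

theorem map_tri_pathCC_comp_map_tril {C : Type u} [Category.{v} C] (F : IA A ⥤ C) (w : List A) :
    F.map (IA.tri A ≫ pathCC w) ≫ F.map (IA.tril A) = F.map (pathLR w) := by
  rw [pathLR, ← CategoryTheory.Functor.map_comp, Category.assoc]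

end Words

section Languages

variable {A : Type} {C : Type u} [Category.{v} C]

theorem OA.eq_l_or_eq_r (X : OA A) : X = OA.l A ∨ X = OA.r A := by
  rcases X with ⟨_ | _ | _, hX⟩
  · exact .inl rfl
  · exact absurd rfl hX
  · exact .inr rfl

theorem OA.functor_hext {F G : OA A ⥤ C}
    (hl : F.obj (OA.l A) = G.obj (OA.l A)) (hr : F.obj (OA.r A) = G.obj (OA.r A))
    (hmap : ∀ p : OA.l A ⟶ OA.r A, F.map p ≍ G.map p) : F = G := by
  refine CategoryTheory.Functor.hext (fun X => ?_) (fun X Y p => ?_)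
  · obtain rfl | rfl := OA.eq_l_or_eq_r X
    exacts [hl, hr]
  obtain rfl | rfl := OA.eq_l_or_eq_r X <;> obtain rfl | rfl := OA.eq_l_or_eq_r Y
  · obtain rfl : p = 𝟙 _ := ObjectProperty.hom_ext _ (path_ll_nil p.hom)
    rw [CategoryTheory.Functor.map_id, CategoryTheory.Functor.map_id, hl]
  · exact hmap p
  · exact (path_rl_false p.hom).elim
  · obtain rfl : p = 𝟙 _ := ObjectProperty.hom_ext _ (path_rr_nil p.hom)
    rw [CategoryTheory.Functor.map_id, CategoryTheory.Functor.map_id, hr]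

theorem Accepts.map_comp_eqToHom {L : OA A ⥤ C} {M N : IA A ⥤ C} (hM : Accepts M L)
    (hN : Accepts N L) {X Y : OA A} (p : X ⟶ Y) :
    M.map ((OA.inc A).map p) ≫ eqToHom (Functor.congr_obj (hM.trans hN.symm) Y) =
      eqToHom (Functor.congr_obj (hM.trans hN.symm) X) ≫ N.map ((OA.inc A).map p) := by
  have h := (eqToHom (hM.trans hN.symm)).naturality p
  simp only [eqToHom_app] at h
  exact h

end Languages

theorem KleisliCat.comp_apply_of_eq_pure {m : Type → Type} [Monad m] [LawfulMonad m]
    {X Y Z : KleisliCat m} (f : X ⟶ Y) (g : Y ⟶ Z) {x : X} {y : Y} (h : f x = pure y) :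
    (f ≫ g) x = g y := by
  rw [KleisliCat.comp_def, h]
  exact pure_bind (f := g) y

section Ainit

variable {A B : Type} {L : List A → Option (List B)}

theorem AinitKl_map_left_center :
    ∀ p : Path (WObj.left : WObj A) WObj.center,
      (AinitKl A B L).map p = fun _ => (pure (toWord p) : TM B (List A))
  | .cons .nil .tri => by
    rw [toWord_cons_tri, toWord_nil]
    exact Paths.lift_toPath _ _
  | .cons p (.letter a) => by
    funext x
    erw [Paths.lift_cons, KleisliCat.comp_apply_of_eq_pure _ _
      (congrFun (AinitKl_map_left_center p) x), toWord_cons_letter]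
    rfl

theorem AinitKl_map_left_right :
    ∀ p : Path (WObj.left : WObj A) WObj.right,
      (AinitKl A B L).map p = fun _ => ((L (toWord p)).map (·, PUnit.unit) : TM B PUnit)
  | .cons p .tril => by
    funext x
    erw [Paths.lift_cons, KleisliCat.comp_apply_of_eq_pure _ _
      (congrFun (AinitKl_map_left_center p) x), toWord_cons_tril]
    rfl

theorem AinitKl_map_tri_pathCC (w : List A) :
    (AinitKl A B L).map (IA.tri A ≫ pathCC w) = fun _ => (pure w : TM B (List A)) := by
  erw [AinitKl_map_left_center, toWord_comp, toWord_pathCC, toWord_cons_tri, toWord_nil]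
  rfl

theorem AinitKl_accepts (A B : Type) (L : List A → Option (List B)) :
    Accepts (AinitKl A B L) (LKl A B L) :=
  OA.functor_hext rfl rfl fun p => heq_of_eq (AinitKl_map_left_right p.hom)

theorem AinitKl.natTrans_app_center {N : IA A ⥤ KlT B} (α : AinitKl A B L ⟶ N) (w : List A) :
    α.app (IA.c A) w = (α.app (IA.l A) ≫ N.map (IA.tri A ≫ pathCC w)) PUnit.unit :=
  (KleisliCat.comp_apply_of_eq_pure _ _ (congrFun (AinitKl_map_tri_pathCC w) _)).symm.trans
    (congrFun (α.naturality _) _)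

theorem AinitKl.natTrans_ext {N : IA A ⥤ KlT B} {α β : AinitKl A B L ⟶ N}
    (hl : α.app (IA.l A) = β.app (IA.l A)) (hr : α.app (IA.r A) = β.app (IA.r A)) : α = β := by
  refine NatTrans.ext (funext fun X => ?_)
  cases X
  · exact hl
  · funext w
    refine (AinitKl.natTrans_app_center α w).trans ?_
    rw [hl]
    exact (AinitKl.natTrans_app_center β w).symm
  · exact hr

variable {M : IA A ⥤ KlT B}

theorem AinitKl_obj_left_eq (hM : Accepts M (LKl A B L)) :
    (AinitKl A B L).obj (IA.l A) = M.obj (IA.l A) :=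
  Functor.congr_obj ((AinitKl_accepts A B L).trans hM.symm) (OA.l A)

theorem AinitKl_obj_right_eq (hM : Accepts M (LKl A B L)) :
    (AinitKl A B L).obj (IA.r A) = M.obj (IA.r A) :=
  Functor.congr_obj ((AinitKl_accepts A B L).trans hM.symm) (OA.r A)

def AinitKl.descApp (hM : Accepts M (LKl A B L)) : ∀ X : WObj A, (AinitKl A B L).obj X ⟶ M.obj X
  | .left => eqToHom (AinitKl_obj_left_eq hM)
  | .center => fun w =>
    (eqToHom (AinitKl_obj_left_eq hM) ≫ M.map (IA.tri A ≫ pathCC w)) PUnit.unit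
  | .right => eqToHom (AinitKl_obj_right_eq hM)

theorem AinitKl.descApp_naturality (hM : Accepts M (LKl A B L)) {X Y : WObj A} (e : X ⟶ Y) :
    (AinitKl A B L).map e.toPath ≫ descApp hM Y = descApp hM X ≫ M.map e.toPath := by
  change WEdge X Y at e
  cases e with
  | tri =>
    funext x
    exact KleisliCat.comp_apply_of_eq_pure _ _ rfl
  | letter a =>
    funext (w : List A)
    refine (KleisliCat.comp_apply_of_eq_pure ((AinitKl A B L).map (IA.letter a)) _
      (y := w ++ [a]) rfl).trans ?_
    change (eqToHom _ ≫ M.map (IA.tri A ≫ pathCC (w ++ [a]))) PUnit.unit =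
      ((eqToHom _ ≫ M.map (IA.tri A ≫ pathCC w)) ≫ M.map (IA.letter a)) PUnit.unit
    rw [pathCC_append, ← Category.assoc, CategoryTheory.Functor.map_comp]
    exact congrFun (Category.assoc _ _ _).symm _
  | tril =>
    funext (w : List A)
    change _ = ((eqToHom (AinitKl_obj_left_eq hM) ≫ M.map (IA.tri A ≫ pathCC w)) ≫
      M.map (IA.tril A)) PUnit.unit
    refine (KleisliCat.comp_apply_of_eq_pure _ _
      (congrFun (AinitKl_map_tri_pathCC w) _)).symm.trans (congrFun ?_ PUnit.unit)
    change _ ≫ (AinitKl A B L).map (IA.tril A) ≫ eqToHom (AinitKl_obj_right_eq hM) = _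
    rw [← Category.assoc, map_tri_pathCC_comp_map_tril, Category.assoc,
      map_tri_pathCC_comp_map_tril]
    exact Accepts.map_comp_eqToHom (AinitKl_accepts A B L) hM (OA.word w)

def AinitKl.desc (M : Auto A (LKl A B L)) :
    Auto.mk (AinitKl A B L) (AinitKl_accepts A B L) ⟶ M :=
  ⟨Paths.liftNatTrans (AinitKl.descApp M.2) (AinitKl.descApp_naturality M.2), by
    refine NatTrans.ext (funext fun X => ?_)
    rw [eqToHom_app]
    obtain rfl | rfl := OA.eq_l_or_eq_r X <;> rfl⟩

theorem AinitKl.hom_ext {M : Auto A (LKl A B L)}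
    (f g : Auto.mk (AinitKl A B L) (AinitKl_accepts A B L) ⟶ M) : f = g := by
  have h := f.2.trans g.2.symm
  exact Subtype.ext (natTrans_ext (NatTrans.congr_app h (OA.l A)) (NatTrans.congr_app h (OA.r A)))

end Ainit

/-- The automaton `𝒜_init` accepts `L_Kl` and is an initial object of `Auto(L_Kl)`. -/
theorem AinitKl_accepts_and_initial (A B : Type) (L : List A → Option (List B)) :
    ∃ h : Accepts (AinitKl A B L) (LKl A B L),
      Nonempty (IsInitial (Auto.mk (AinitKl A B L) h)) :=
  ⟨AinitKl_accepts A B L, ⟨IsInitial.ofUniqueHom AinitKl.desc fun _ _ => AinitKl.hom_ext _ _⟩⟩
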